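/- arXiv:1709.05367 — 2 statements merged into one kernel-verified Lean document; each statement's English description precedes it below -/
import Mathlib

section
/- Let Z = ∂/∂z + i z̄ ∂/∂u act on smooth functions of (z,u) ∈ ℂ × ℝ. For (z,u) ≠ (0,0), the function F(z,u) = log(|z|⁴ + u²) satisfies Z(Z F) = −(Z F)², i.e. Z Z F = −4z̄²/(|z|² − iu)². -/
/-!
With `w = |z|² − iu` one has `Z z̄ = 0`, `Z w = 2 z̄` and `Z w̄ = 0`, while `|z|⁴ + u² = w w̄` is a
positive real, so `F = log (w w̄)` with the principal branch. The Leibniz and chain rules give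
`Z F = 2 z̄ w̄ / (w w̄) = 2 z̄ / w` away from the origin, and then
`Z Z F = −2 z̄ · Z w / w² = −4 z̄² / w² = −(Z F)²`.
-/

open Complex

/-- The CR vector field Z = ∂/∂z + i z̄ ∂/∂u on the Heisenberg group ℂ × ℝ,
where ∂/∂z = ½(∂/∂x − i ∂/∂y) is the Wirtinger derivative. -/
noncomputable def Zop (f : ℂ × ℝ → ℂ) : ℂ × ℝ → ℂ := fun p =>
  (1 / 2 : ℂ) * (fderiv ℝ f p (1, 0) - Complex.I * fderiv ℝ f p (Complex.I, 0))
    + Complex.I * (starRingEnd ℂ p.1) * fderiv ℝ f p (0, 1)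

/-- The CR vector field Z̄ = ∂/∂z̄ − i z ∂/∂u on the Heisenberg group ℂ × ℝ,
where ∂/∂z̄ = ½(∂/∂x + i ∂/∂y). -/
noncomputable def Zbar (f : ℂ × ℝ → ℂ) : ℂ × ℝ → ℂ := fun p =>
  (1 / 2 : ℂ) * (fderiv ℝ f p (1, 0) + Complex.I * fderiv ℝ f p (Complex.I, 0))
    - Complex.I * p.1 * fderiv ℝ f p (0, 1)

/-- The vector field T = ∂/∂u. -/
noncomputable def Tder (f : ℂ × ℝ → ℂ) : ℂ × ℝ → ℂ := fun p => fderiv ℝ f p (0, 1)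

/-- The sublaplacian Δ_b = Z Z̄ + Z̄ Z. -/
noncomputable def Lapb (f : ℂ × ℝ → ℂ) : ℂ × ℝ → ℂ := fun p =>
  Zop (Zbar f) p + Zbar (Zop f) p

open Filter Topology ComplexConjugate

/-- With `Zop f p = zopAt p (fderiv ℝ f p)`, the Leibniz and chain rules for `Zop` are those of
`fderiv` followed by `ℂ`-linearity of `zopAt p`. -/
noncomputable def zopAt (p : ℂ × ℝ) : (ℂ × ℝ →L[ℝ] ℂ) →ₗ[ℂ] ℂ where
  toFun D := (1 / 2 : ℂ) * (D (1, 0) - I * D (I, 0)) + I * conj p.1 * D (0, 1)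
  map_add' D E := by simp only [FunLike.coe_add, Pi.add_apply]; ring
  map_smul' c D := by
    simp only [FunLike.coe_smul, Pi.smul_apply, smul_eq_mul, RingHom.id_apply]; ring

section Calculus

variable {f g : ℂ × ℝ → ℂ} {p : ℂ × ℝ}

theorem Zop_apply_eq_zopAt (f : ℂ × ℝ → ℂ) (p : ℂ × ℝ) : Zop f p = zopAt p (fderiv ℝ f p) :=
  rfl

theorem HasFDerivAt.Zop_eq {D : ℂ × ℝ →L[ℝ] ℂ} (h : HasFDerivAt f D p) : Zop f p = zopAt p D := by
  rw [Zop_apply_eq_zopAt, h.fderiv]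

theorem Zop_congr_of_eventuallyEq (h : f =ᶠ[𝓝 p] g) : Zop f p = Zop g p := by
  rw [Zop_apply_eq_zopAt, Zop_apply_eq_zopAt, h.fderiv_eq]

theorem Zop_add (hf : DifferentiableAt ℝ f p) (hg : DifferentiableAt ℝ g p) :
    Zop (fun q => f q + g q) p = Zop f p + Zop g p := by
  rw [Zop_apply_eq_zopAt, fderiv_fun_add hf hg, map_add]; rfl

theorem Zop_sub (hf : DifferentiableAt ℝ f p) (hg : DifferentiableAt ℝ g p) :
    Zop (fun q => f q - g q) p = Zop f p - Zop g p := by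
  rw [Zop_apply_eq_zopAt, fderiv_fun_sub hf hg, map_sub]; rfl

theorem Zop_mul (hf : DifferentiableAt ℝ f p) (hg : DifferentiableAt ℝ g p) :
    Zop (fun q => f q * g q) p = f p * Zop g p + g p * Zop f p := by
  rw [Zop_apply_eq_zopAt, fderiv_fun_mul hf hg, map_add, map_smul, map_smul]; rfl

theorem Zop_const_mul (c : ℂ) (hf : DifferentiableAt ℝ f p) :
    Zop (fun q => c * f q) p = c * Zop f p := by
  rw [Zop_apply_eq_zopAt, fderiv_const_mul hf, map_smul]; rfl

theorem Zop_comp {h : ℂ → ℂ} {h' : ℂ} (hh : HasDerivAt h h' (f p))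
    (hf : DifferentiableAt ℝ f p) : Zop (fun q => h (f q)) p = h' * Zop f p := by
  rw [Zop_apply_eq_zopAt, ← Function.comp_def, (hh.comp_hasFDerivAt p hf.hasFDerivAt).fderiv,
    map_smul]
  rfl

theorem Zop_inv (hf : DifferentiableAt ℝ f p) (hf0 : f p ≠ 0) :
    Zop (fun q => (f q)⁻¹) p = -Zop f p / f p ^ 2 := by
  rw [Zop_comp (hasDerivAt_inv hf0) hf]; ring

end Calculus

section Coordinates

variable (p : ℂ × ℝ)

theorem Zop_fst : Zop (fun q => q.1) p = 1 := by
  rw [(hasFDerivAt_fst (𝕜 := ℝ) (p := p)).Zop_eq]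
  norm_num [zopAt]

theorem Zop_conj_fst : Zop (fun q => conj q.1) p = 0 := by
  refine (conjCLE.hasFDerivAt.comp p (hasFDerivAt_fst (𝕜 := ℝ) (p := p))).Zop_eq.trans ?_
  simp [zopAt]

theorem Zop_ofReal_snd : Zop (fun q => (q.2 : ℂ)) p = I * conj p.1 := by
  refine (ofRealCLM.hasFDerivAt.comp p (hasFDerivAt_snd (𝕜 := ℝ) (p := p))).Zop_eq.trans ?_
  simp [zopAt]

end Coordinates

/-- The complex Korányi gauge: its modulus is the square of the Korányi norm `(|z|⁴ + u²)^(1/4)`. -/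
noncomputable def koranyi (q : ℂ × ℝ) : ℂ := (‖q.1‖ : ℂ) ^ 2 - I * q.2

section Koranyi

variable {q : ℂ × ℝ}

theorem koranyi_eq_mul_conj_sub (q : ℂ × ℝ) : koranyi q = q.1 * conj q.1 - I * q.2 := by
  rw [koranyi, mul_conj']

theorem conj_koranyi (q : ℂ × ℝ) : conj (koranyi q) = q.1 * conj q.1 + I * q.2 := by
  simp [koranyi_eq_mul_conj_sub, mul_comm]

theorem koranyi_mul_conj (q : ℂ × ℝ) :
    koranyi q * conj (koranyi q) = ((‖q.1‖ ^ 4 + q.2 ^ 2 : ℝ) : ℂ) := by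
  rw [conj_koranyi, koranyi_eq_mul_conj_sub, mul_conj']
  push_cast
  linear_combination (-(q.2 : ℂ) ^ 2) * I_sq

theorem norm_pow_four_add_sq_pos (hq : q ≠ 0) : 0 < ‖q.1‖ ^ 4 + q.2 ^ 2 := by
  rcases eq_or_ne q.1 0 with h | h
  · have : q.2 ≠ 0 := fun h2 => hq (Prod.ext h h2)
    positivity
  · have : 0 < ‖q.1‖ := norm_pos_iff.2 h
    positivity

theorem koranyi_ne_zero (hq : q ≠ 0) : koranyi q ≠ 0 := by
  intro h
  have hnorm := koranyi_mul_conj q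
  rw [h, zero_mul, eq_comm, ofReal_eq_zero] at hnorm
  exact (norm_pow_four_add_sq_pos hq).ne' hnorm

@[fun_prop]
theorem differentiable_koranyi : Differentiable ℝ koranyi := by
  rw [funext koranyi_eq_mul_conj_sub]
  fun_prop

theorem Zop_koranyi (p : ℂ × ℝ) : Zop koranyi p = 2 * conj p.1 := by
  rw [funext koranyi_eq_mul_conj_sub, Zop_sub (by fun_prop) (by fun_prop),
    Zop_mul (by fun_prop) (by fun_prop), Zop_const_mul _ (by fun_prop), Zop_fst, Zop_conj_fst,
    Zop_ofReal_snd]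
  linear_combination (-conj p.1) * I_sq

theorem Zop_conj_koranyi (p : ℂ × ℝ) : Zop (fun q => conj (koranyi q)) p = 0 := by
  rw [funext conj_koranyi, Zop_add (by fun_prop) (by fun_prop),
    Zop_mul (by fun_prop) (by fun_prop), Zop_const_mul _ (by fun_prop), Zop_fst, Zop_conj_fst,
    Zop_ofReal_snd]
  linear_combination conj p.1 * I_sq

end Koranyi

theorem ofReal_log_norm_pow_four_add_sq (q : ℂ × ℝ) :
    ((Real.log (‖q.1‖ ^ 4 + q.2 ^ 2) : ℝ) : ℂ) = log (koranyi q * conj (koranyi q)) := by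
  rw [koranyi_mul_conj, ofReal_log (by positivity)]

theorem Zop_log_norm_pow_four_add_sq {q : ℂ × ℝ} (hq : q ≠ 0) :
    Zop (fun q => ((Real.log (‖q.1‖ ^ 4 + q.2 ^ 2) : ℝ) : ℂ)) q = 2 * conj q.1 / koranyi q := by
  have hslit : koranyi q * conj (koranyi q) ∈ slitPlane := by
    rw [koranyi_mul_conj]
    exact ofReal_mem_slitPlane.2 (norm_pow_four_add_sq_pos hq)
  rw [funext ofReal_log_norm_pow_four_add_sq, Zop_comp (hasDerivAt_log hslit) (by fun_prop),
    Zop_mul (by fun_prop) (by fun_prop), Zop_koranyi, Zop_conj_koranyi]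
  have hk : conj (koranyi q) ≠ 0 := (map_ne_zero _).2 (koranyi_ne_zero hq)
  field_simp
  ring

theorem Zop_Zop_log_norm_pow_four_add_sq {p : ℂ × ℝ} (hp : p ≠ 0) :
    Zop (Zop (fun q => ((Real.log (‖q.1‖ ^ 4 + q.2 ^ 2) : ℝ) : ℂ))) p
      = -4 * conj p.1 ^ 2 / koranyi p ^ 2 := by
  have hev : Zop (fun q => ((Real.log (‖q.1‖ ^ 4 + q.2 ^ 2) : ℝ) : ℂ))
      =ᶠ[𝓝 p] fun q => 2 * conj q.1 * (koranyi q)⁻¹ := by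
    filter_upwards [isOpen_ne.mem_nhds hp] with q hq
    rw [Zop_log_norm_pow_four_add_sq hq, div_eq_mul_inv]
  have hk := koranyi_ne_zero hp
  rw [Zop_congr_of_eventuallyEq hev, Zop_mul (by fun_prop) (by fun_prop (disch := exact hk)),
    Zop_const_mul _ (by fun_prop), Zop_conj_fst, Zop_inv (differentiable_koranyi p) hk,
    Zop_koranyi]
  field_simp
  ring

/-- For (z,u) ≠ (0,0), with F = log(|z|⁴+u²): Z Z F = −(Z F)² = −4z̄²/(|z|² − iu)². -/
theorem zop_zop_log_heisenberg (p : ℂ × ℝ) (hp : p ≠ 0) :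
    Zop (Zop (fun q => ((Real.log (‖q.1‖ ^ 4 + q.2 ^ 2) : ℝ) : ℂ))) p
        = -(Zop (fun q => ((Real.log (‖q.1‖ ^ 4 + q.2 ^ 2) : ℝ) : ℂ)) p) ^ 2 ∧
    Zop (Zop (fun q => ((Real.log (‖q.1‖ ^ 4 + q.2 ^ 2) : ℝ) : ℂ))) p
        = -4 * (starRingEnd ℂ p.1) ^ 2
            / ((‖p.1‖ : ℂ) ^ 2 - Complex.I * (p.2 : ℂ)) ^ 2 := by
  rw [Zop_Zop_log_norm_pow_four_add_sq hp, Zop_log_norm_pow_four_add_sq hp]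
  exact ⟨by ring, rfl⟩
end

section
/- Let Z = ∂/∂z + i z̄ ∂/∂u, Z̄ = ∂/∂z̄ − i z ∂/∂u, T = ∂/∂u, and Δ_b = Z Z̄ + Z̄ Z, acting on smooth complex-valued functions of (z,u) ∈ ℂ × ℝ. Then for every smooth f, Δ_b(Δ_b f) + 4 T(T f) = 4 Z(Z̄(Z̄(Z f))), i.e. the fourth-order operator Δ_b² + 4T² factors as 4 Z Z̄ Z̄ Z. -/
open Complex

noncomputable section AuxD

/-- Directional derivative operator. -/
def Dv (v : ℂ × ℝ) (f : ℂ × ℝ → ℂ) : ℂ × ℝ → ℂ := fun p => fderiv ℝ f p v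

lemma Dv_contDiff {f : ℂ × ℝ → ℂ} (hf : ContDiff ℝ (⊤ : ℕ∞) f) (v : ℂ × ℝ) :
    ContDiff ℝ (⊤ : ℕ∞) (Dv v f) :=
  (hf.fderiv_right (by simp)).clm_apply contDiff_const

lemma Dv_diffAt {f : ℂ × ℝ → ℂ} (hf : ContDiff ℝ (⊤ : ℕ∞) f) (v p : ℂ × ℝ) :
    DifferentiableAt ℝ (Dv v f) p :=
  ((Dv_contDiff hf v).differentiable (by simp)) p

lemma Dv_comm {f : ℂ × ℝ → ℂ} (hf : ContDiff ℝ (⊤ : ℕ∞) f) (v w : ℂ × ℝ) (p : ℂ × ℝ) :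
    Dv v (Dv w f) p = Dv w (Dv v f) p := by
  have hsymm : IsSymmSndFDerivAt ℝ f p := (hf.contDiffAt).isSymmSndFDerivAt (by rw [minSmoothness_of_isRCLikeNormedField]; exact WithTop.coe_le_coe.mpr le_top)
  have hd : DifferentiableAt ℝ (fderiv ℝ f) p :=
    ((hf.fderiv_right (m := 1) (WithTop.coe_le_coe.mpr le_top)).differentiable one_ne_zero).differentiableAt
  have key : ∀ u₁ u₂ : ℂ × ℝ, Dv u₁ (Dv u₂ f) p = fderiv ℝ (fderiv ℝ f) p u₁ u₂ := by
    intro u₁ u₂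
    show fderiv ℝ (fun q => (fderiv ℝ f q) u₂) p u₁ = _
    rw [fderiv_clm_apply hd (differentiableAt_const u₂)]
    simp
  rw [key v w, key w v, hsymm v w]

lemma Dv_add {f g : ℂ × ℝ → ℂ} {p : ℂ × ℝ} (hf : DifferentiableAt ℝ f p)
    (hg : DifferentiableAt ℝ g p) (v : ℂ × ℝ) :
    Dv v (fun q => f q + g q) p = Dv v f p + Dv v g p := by
  simp [Dv, fderiv_fun_add hf hg]

lemma Dv_sub {f g : ℂ × ℝ → ℂ} {p : ℂ × ℝ} (hf : DifferentiableAt ℝ f p)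
    (hg : DifferentiableAt ℝ g p) (v : ℂ × ℝ) :
    Dv v (fun q => f q - g q) p = Dv v f p - Dv v g p := by
  simp [Dv, fderiv_fun_sub hf hg]

lemma Dv_const_mul {f : ℂ × ℝ → ℂ} {p : ℂ × ℝ} (hf : DifferentiableAt ℝ f p)
    (c : ℂ) (v : ℂ × ℝ) :
    Dv v (fun q => c * f q) p = c * Dv v f p := by
  simp [Dv, fderiv_const_mul hf c]

lemma Dv_mul {f g : ℂ × ℝ → ℂ} {p : ℂ × ℝ} (hf : DifferentiableAt ℝ f p)
    (hg : DifferentiableAt ℝ g p) (v : ℂ × ℝ) :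
    Dv v (fun q => f q * g q) p = Dv v f p * g p + f p * Dv v g p := by
  rw [Dv, fderiv_fun_mul hf hg]
  simp only [Dv, ContinuousLinearMap.add_apply, ContinuousLinearMap.smul_apply, smul_eq_mul]
  ring

lemma contDiff_conj_fst : ContDiff ℝ (⊤ : ℕ∞) (fun q : ℂ × ℝ => (starRingEnd ℂ) q.1) := by
  have : (fun q : ℂ × ℝ => (starRingEnd ℂ) q.1)
      = (Complex.conjCLE.toContinuousLinearMap.comp (ContinuousLinearMap.fst ℝ ℂ ℝ)) := rfl
  rw [this]
  exact (Complex.conjCLE.toContinuousLinearMap.comp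
    (ContinuousLinearMap.fst ℝ ℂ ℝ)).contDiff

lemma Dv_conj (v : ℂ × ℝ) (p : ℂ × ℝ) :
    Dv v (fun q : ℂ × ℝ => (starRingEnd ℂ) q.1) p = (starRingEnd ℂ) v.1 := by
  have : (fun q : ℂ × ℝ => (starRingEnd ℂ) q.1)
      = (Complex.conjCLE.toContinuousLinearMap.comp (ContinuousLinearMap.fst ℝ ℂ ℝ)) := rfl
  rw [Dv, this, ContinuousLinearMap.fderiv]
  rfl

lemma contDiff_coeff_conj : ContDiff ℝ (⊤ : ℕ∞) (fun q : ℂ × ℝ => Complex.I * (starRingEnd ℂ) q.1) :=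
  contDiff_const.mul contDiff_conj_fst

lemma contDiff_coeff_z : ContDiff ℝ (⊤ : ℕ∞) (fun q : ℂ × ℝ => Complex.I * q.1) :=
  contDiff_const.mul (contDiff_fst)

lemma Dv_coeff_conj (v p : ℂ × ℝ) :
    Dv v (fun q : ℂ × ℝ => Complex.I * (starRingEnd ℂ) q.1) p
      = Complex.I * (starRingEnd ℂ) v.1 := by
  rw [Dv_const_mul (((contDiff_conj_fst).differentiable (by simp)) p), Dv_conj]

lemma Dv_z (v : ℂ × ℝ) (p : ℂ × ℝ) : Dv v (fun q : ℂ × ℝ => q.1) p = v.1 := by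
  have : (fun q : ℂ × ℝ => q.1) = (ContinuousLinearMap.fst ℝ ℂ ℝ) := rfl
  rw [Dv, this, ContinuousLinearMap.fderiv]
  rfl

lemma Dv_coeff_z (v p : ℂ × ℝ) :
    Dv v (fun q : ℂ × ℝ => Complex.I * q.1) p = Complex.I * v.1 := by
  rw [Dv_const_mul (((contDiff_fst (n := 1)).differentiable one_ne_zero) p), Dv_z]

end AuxD

open Complex

section Ops

lemma Zop_apply (f : ℂ × ℝ → ℂ) (p : ℂ × ℝ) :
    Zop f p = (1/2 : ℂ) * Dv (1, 0) f p - (Complex.I/2) * Dv (Complex.I, 0) f p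
      + Complex.I * (starRingEnd ℂ) p.1 * Dv (0, 1) f p := by
  simp only [Zop, Dv]
  ring

lemma Zbar_apply (f : ℂ × ℝ → ℂ) (p : ℂ × ℝ) :
    Zbar f p = (1/2 : ℂ) * Dv (1, 0) f p + (Complex.I/2) * Dv (Complex.I, 0) f p
      - Complex.I * p.1 * Dv (0, 1) f p := by
  simp only [Zbar, Dv]
  ring

lemma Tder_eq (f : ℂ × ℝ → ℂ) : Tder f = Dv (0, 1) f := rfl

lemma Zop_contDiff {f : ℂ × ℝ → ℂ} (hf : ContDiff ℝ (⊤ : ℕ∞) f) : ContDiff ℝ (⊤ : ℕ∞) (Zop f) := by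
  have : Zop f = fun p => (1/2 : ℂ) * (Dv (1,0) f p - Complex.I * Dv (Complex.I,0) f p)
      + (Complex.I * (starRingEnd ℂ) p.1) * Dv (0,1) f p := rfl
  rw [this]
  exact (contDiff_const.mul ((Dv_contDiff hf _).sub
    (contDiff_const.mul (Dv_contDiff hf _)))).add
    (contDiff_coeff_conj.mul (Dv_contDiff hf _))

lemma Zbar_contDiff {f : ℂ × ℝ → ℂ} (hf : ContDiff ℝ (⊤ : ℕ∞) f) : ContDiff ℝ (⊤ : ℕ∞) (Zbar f) := by
  have : Zbar f = fun p => (1/2 : ℂ) * (Dv (1,0) f p + Complex.I * Dv (Complex.I,0) f p)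
      - (Complex.I * p.1) * Dv (0,1) f p := rfl
  rw [this]
  exact (contDiff_const.mul ((Dv_contDiff hf _).add
    (contDiff_const.mul (Dv_contDiff hf _)))).sub
    (contDiff_coeff_z.mul (Dv_contDiff hf _))

lemma Tder_contDiff {f : ℂ × ℝ → ℂ} (hf : ContDiff ℝ (⊤ : ℕ∞) f) : ContDiff ℝ (⊤ : ℕ∞) (Tder f) :=
  Dv_contDiff hf _

lemma Dv_Zop {f : ℂ × ℝ → ℂ} (hf : ContDiff ℝ (⊤ : ℕ∞) f) (v p : ℂ × ℝ) :
    Dv v (Zop f) p = (1/2 : ℂ) * Dv v (Dv (1,0) f) p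
      - (Complex.I/2) * Dv v (Dv (Complex.I,0) f) p
      + Complex.I * (starRingEnd ℂ) v.1 * Dv (0,1) f p
      + Complex.I * (starRingEnd ℂ) p.1 * Dv v (Dv (0,1) f) p := by
  have h1 := Dv_diffAt hf ((1:ℂ), (0:ℝ)) p
  have h2 := Dv_diffAt hf ((Complex.I:ℂ), (0:ℝ)) p
  have h3 := Dv_diffAt hf ((0:ℂ), (1:ℝ)) p
  have hc : DifferentiableAt ℝ (fun q : ℂ × ℝ => Complex.I * (starRingEnd ℂ) q.1) p :=
    (contDiff_coeff_conj.differentiable (by simp)) p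
  have e : Zop f = fun q => ((1/2 : ℂ) * (Dv (1,0) f q - Complex.I * Dv (Complex.I,0) f q))
      + ((fun q : ℂ × ℝ => Complex.I * (starRingEnd ℂ) q.1) q * Dv (0,1) f q) := rfl
  rw [e, Dv_add (by exact (h1.sub (h2.const_mul _)).const_mul _) (by exact hc.mul h3),
    Dv_const_mul (f := fun q => Dv (1,0) f q - Complex.I * Dv (Complex.I,0) f q) (h1.sub (h2.const_mul _)),
    Dv_sub h1 (h2.const_mul _), Dv_const_mul h2,
    Dv_mul hc h3, Dv_coeff_conj]
  ring

lemma Dv_Zbar {f : ℂ × ℝ → ℂ} (hf : ContDiff ℝ (⊤ : ℕ∞) f) (v p : ℂ × ℝ) :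
    Dv v (Zbar f) p = (1/2 : ℂ) * Dv v (Dv (1,0) f) p
      + (Complex.I/2) * Dv v (Dv (Complex.I,0) f) p
      - Complex.I * v.1 * Dv (0,1) f p
      - Complex.I * p.1 * Dv v (Dv (0,1) f) p := by
  have h1 := Dv_diffAt hf ((1:ℂ), (0:ℝ)) p
  have h2 := Dv_diffAt hf ((Complex.I:ℂ), (0:ℝ)) p
  have h3 := Dv_diffAt hf ((0:ℂ), (1:ℝ)) p
  have hc : DifferentiableAt ℝ (fun q : ℂ × ℝ => Complex.I * q.1) p :=
    (contDiff_coeff_z.differentiable (by simp)) p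
  have e : Zbar f = fun q => ((1/2 : ℂ) * (Dv (1,0) f q + Complex.I * Dv (Complex.I,0) f q))
      - ((fun q : ℂ × ℝ => Complex.I * q.1) q * Dv (0,1) f q) := rfl
  rw [e, Dv_sub (by exact (h1.add (h2.const_mul _)).const_mul _) (by exact hc.mul h3),
    Dv_const_mul (f := fun q => Dv (1,0) f q + Complex.I * Dv (Complex.I,0) f q) (h1.add (h2.const_mul _)),
    Dv_add h1 (h2.const_mul _), Dv_const_mul h2,
    Dv_mul hc h3, Dv_coeff_z]
  ring

/-- T commutes with Z. -/
lemma T_Zop {f : ℂ × ℝ → ℂ} (hf : ContDiff ℝ (⊤ : ℕ∞) f) :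
    Tder (Zop f) = Zop (Tder f) := by
  funext p
  rw [Tder_eq, Dv_Zop hf, Tder_eq, Zop_apply,
    Dv_comm hf ((0:ℂ),(1:ℝ)) ((1:ℂ),(0:ℝ)), Dv_comm hf ((0:ℂ),(1:ℝ)) ((Complex.I:ℂ),(0:ℝ))]
  simp

/-- T commutes with Z̄. -/
lemma T_Zbar {f : ℂ × ℝ → ℂ} (hf : ContDiff ℝ (⊤ : ℕ∞) f) :
    Tder (Zbar f) = Zbar (Tder f) := by
  funext p
  rw [Tder_eq, Dv_Zbar hf, Tder_eq, Zbar_apply,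
    Dv_comm hf ((0:ℂ),(1:ℝ)) ((1:ℂ),(0:ℝ)), Dv_comm hf ((0:ℂ),(1:ℝ)) ((Complex.I:ℂ),(0:ℝ))]
  simp

/-- The commutator identity Z Z̄ = Z̄ Z − 2i T. -/
lemma bracket {f : ℂ × ℝ → ℂ} (hf : ContDiff ℝ (⊤ : ℕ∞) f) :
    Zop (Zbar f) = fun p => Zbar (Zop f) p + (-(2 * Complex.I)) * Tder f p := by
  funext p
  rw [Zop_apply, Zbar_apply, Tder_eq,
    Dv_Zbar hf ((1:ℂ),(0:ℝ)), Dv_Zbar hf ((Complex.I:ℂ),(0:ℝ)), Dv_Zbar hf ((0:ℂ),(1:ℝ)),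
    Dv_Zop hf ((1:ℂ),(0:ℝ)), Dv_Zop hf ((Complex.I:ℂ),(0:ℝ)), Dv_Zop hf ((0:ℂ),(1:ℝ)),
    Dv_comm hf ((Complex.I:ℂ),(0:ℝ)) ((1:ℂ),(0:ℝ)),
    Dv_comm hf ((0:ℂ),(1:ℝ)) ((1:ℂ),(0:ℝ)),
    Dv_comm hf ((0:ℂ),(1:ℝ)) ((Complex.I:ℂ),(0:ℝ))]
  simp [Complex.conj_I]
  ring

lemma Zop_lin {g h : ℂ × ℝ → ℂ} (hg : ContDiff ℝ (⊤ : ℕ∞) g) (hh : ContDiff ℝ (⊤ : ℕ∞) h)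
    (a b : ℂ) (p : ℂ × ℝ) :
    Zop (fun q => a * g q + b * h q) p = a * Zop g p + b * Zop h p := by
  have hg' := fun v => Dv_diffAt hg v p
  have hh' := fun v => Dv_diffAt hh v p
  have key : ∀ v : ℂ × ℝ, Dv v (fun q => a * g q + b * h q) p
      = a * Dv v g p + b * Dv v h p := by
    intro v
    rw [Dv_add (((hg.differentiable (by simp)) p).const_mul a)
      (((hh.differentiable (by simp)) p).const_mul b),
      Dv_const_mul ((hg.differentiable (by simp)) p),
      Dv_const_mul ((hh.differentiable (by simp)) p)]
  rw [Zop_apply, Zop_apply, Zop_apply, key, key, key]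
  ring

lemma Zbar_lin {g h : ℂ × ℝ → ℂ} (hg : ContDiff ℝ (⊤ : ℕ∞) g) (hh : ContDiff ℝ (⊤ : ℕ∞) h)
    (a b : ℂ) (p : ℂ × ℝ) :
    Zbar (fun q => a * g q + b * h q) p = a * Zbar g p + b * Zbar h p := by
  have key : ∀ v : ℂ × ℝ, Dv v (fun q => a * g q + b * h q) p
      = a * Dv v g p + b * Dv v h p := by
    intro v
    rw [Dv_add (((hg.differentiable (by simp)) p).const_mul a)
      (((hh.differentiable (by simp)) p).const_mul b),
      Dv_const_mul ((hg.differentiable (by simp)) p),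
      Dv_const_mul ((hh.differentiable (by simp)) p)]
  rw [Zbar_apply, Zbar_apply, Zbar_apply, key, key, key]
  ring

end Ops

/-- The factorization Δ_b² + 4T² = 4 Z Z̄ Z̄ Z on smooth functions. -/
theorem paneitz_factorization (f : ℂ × ℝ → ℂ) (hf : ContDiff ℝ (⊤ : ℕ∞) f) (p : ℂ × ℝ) :
    Lapb (Lapb f) p + 4 * Tder (Tder f) p = 4 * Zop (Zbar (Zbar (Zop f))) p := by
  -- notation
  set P : ℂ × ℝ → ℂ := Zbar (Zop f) with hP
  set Q : ℂ × ℝ → ℂ := Tder f with hQ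
  have hPs : ContDiff ℝ (⊤ : ℕ∞) P := Zbar_contDiff (Zop_contDiff hf)
  have hQs : ContDiff ℝ (⊤ : ℕ∞) Q := Tder_contDiff hf
  have hZBf : ContDiff ℝ (⊤ : ℕ∞) (Zop (Zbar f)) := Zop_contDiff (Zbar_contDiff hf)
  -- the two expressions for Lapb f
  have hL : Lapb f = fun q => 2 * P q + (-(2 * Complex.I)) * Q q := by
    funext q
    show Zop (Zbar f) q + Zbar (Zop f) q = _
    rw [congrFun (bracket hf) q]
    ring
  have hL' : Lapb f = fun q => 2 * Zop (Zbar f) q + (2 * Complex.I) * Q q := by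
    funext q
    show Zop (Zbar f) q + Zbar (Zop f) q = _
    rw [congrFun (bracket hf) q]
    ring
  -- key mixed third-order identities
  have hZQ : Zop Q = Tder (Zop f) := (T_Zop hf).symm
  have hBZQ : Zbar (Zop Q) = Tder P := by
    rw [hZQ, T_Zbar (Zop_contDiff hf)]
  have hZBQ : Zop (Zbar Q) = fun q => Tder P q + (-(2 * Complex.I)) * Tder Q q := by
    rw [bracket hQs, hBZQ]
  -- term A = Z B (Lapb f)
  have hBL : Zbar (Lapb f) = fun q => 2 * Zbar P q + (-(2 * Complex.I)) * Zbar Q q := by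
    rw [hL]; funext q; exact Zbar_lin hPs hQs _ _ q
  have hA : Zop (Zbar (Lapb f)) p
      = 2 * Zop (Zbar P) p + (-(2 * Complex.I)) * Zop (Zbar Q) p := by
    rw [hBL]; exact Zop_lin (Zbar_contDiff hPs) (Zbar_contDiff hQs) _ _ p
  -- term C = B Z (Lapb f)
  have hZBfEq : Zop (Zbar f) = fun q => (1 : ℂ) * P q + (-(2 * Complex.I)) * Q q := by
    rw [bracket hf]; funext q; ring
  have hZZBf : Zop (Zop (Zbar f)) = fun q => (1 : ℂ) * Zop P q + (-(2 * Complex.I)) * Zop Q q := by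
    rw [hZBfEq]; funext q; exact Zop_lin hPs hQs _ _ q
  have hBZP : Zbar (Zop P) p = Zop (Zbar P) p + (2 * Complex.I) * Tder P p := by
    have := congrFun (bracket hPs) p
    rw [this]; ring
  have hBZZBf : Zbar (Zop (Zop (Zbar f))) p = Zop (Zbar P) p := by
    rw [hZZBf]
    rw [Zbar_lin (Zop_contDiff hPs) (Zop_contDiff hQs) _ _ p]
    rw [hBZP, congrFun hBZQ p]
    ring
  have hZL : Zop (Lapb f) = fun q => 2 * Zop (Zop (Zbar f)) q + (2 * Complex.I) * Zop Q q := by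
    rw [hL']; funext q; exact Zop_lin hZBf hQs _ _ q
  have hC : Zbar (Zop (Lapb f)) p
      = 2 * Zbar (Zop (Zop (Zbar f))) p + (2 * Complex.I) * Zbar (Zop Q) p := by
    rw [hZL]; exact Zbar_lin (Zop_contDiff hZBf) (Zop_contDiff hQs) _ _ p
  -- assemble
  have expand : Lapb (Lapb f) p = Zop (Zbar (Lapb f)) p + Zbar (Zop (Lapb f)) p := rfl
  rw [expand, hA, hC, hBZZBf, congrFun hZBQ p, congrFun hBZQ p]
  have hTT : Tder (Tder f) p = Tder Q p := rfl
  rw [hTT]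
  ring_nf
  rw [Complex.I_sq]
  ring
end
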